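/- Let f be nondecreasing and satisfy (H1), (H2) and (H3). There exist C > 0 and ε₀ > 0, independent of ρ, such that for every ρ > 1, every ε ∈ (0, ε₀), and every truncated maximizer ζ^{ε,ρ} as in the context: Gζ^{ε,ρ}(x) ≤ (κ/(2π))·log(1/ε) + (κ/(4π))·log f(ρ) + C for every x ∈ Π. -/

import Mathlib

open MeasureTheory Real Filter
open scoped ENNReal Topology

noncomputable section

abbrev Pt : Type := EuclideanSpace ℝ (Fin 2)

/-- The point (a, b) in the plane. -/
def pt (a b : ℝ) : Pt := WithLp.toLp 2 ![a, b]

/-- The open right half plane Π. -/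
def halfPlane : Set Pt := {x | 0 < x 0}

/-- Reflection across the x₂-axis: x ↦ x̄. -/
def reflect (x : Pt) : Pt := pt (-(x 0)) (x 1)

/-- Reflection across the x₁-axis. -/
def flip2 (x : Pt) : Pt := pt (x 0) (-(x 1))

/-- Green's function of -Δ in the half plane with zero Dirichlet data. -/
def G (x y : Pt) : ℝ := (1 / (2 * π)) * Real.log (dist (reflect x) y / dist x y)

/-- Green's operator. -/
def Gop (ζ : Pt → ℝ) (x : Pt) : ℝ := ∫ y in halfPlane, G x y * ζ y

/-- The rectangle D. -/
def Dset (r : ℝ) : Set Pt := {x | r/2 < x 0 ∧ x 0 < 2*r ∧ -1 < x 1 ∧ x 1 < 1}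

/-- The admissible class A. -/
structure InA (r κ : ℝ) (ζ : Pt → ℝ) : Prop where
  measurable : Measurable ζ
  essBdd : ∃ M : ℝ, ∀ᵐ x ∂(volume : Measure Pt), |ζ x| ≤ M
  nonneg : ∀ᵐ x ∂(volume : Measure Pt), 0 ≤ ζ x
  mass_le : (∫ x in halfPlane, ζ x) ≤ κ
  support_ae : ∀ᵐ x ∂(volume : Measure Pt), x ∉ Dset r → ζ x = 0

/-- F(s) = ∫₀ˢ f(t) dt. -/
def Fint (f : ℝ → ℝ) (s : ℝ) : ℝ := ∫ t in (0:ℝ)..s, f t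

/-- The convex conjugate J of F, with values in [0, +∞] (note J ≥ 0 since F(0) = 0). -/
def Jconj (f : ℝ → ℝ) (s : ℝ) : ℝ≥0∞ := ⨆ t : ℝ, ENNReal.ofReal (s * t - Fint f t)

/-- The energy functional E_ε, with values in [-∞, +∞). -/
def energy (f : ℝ → ℝ) (r W ε : ℝ) (ζ : Pt → ℝ) : EReal :=
  (((1/2) * (∫ x in Dset r, ζ x * Gop ζ x) - W * ∫ x in Dset r, (x 0) * ζ x : ℝ) : EReal)
  - ((ENNReal.ofReal (ε⁻¹ ^ 2) * ∫⁻ x in Dset r, Jconj f (ε^2 * ζ x) : ℝ≥0∞) : EReal)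

/-- Steiner symmetry with respect to the line x₂ = 0. -/
def SteinerSym (ζ : Pt → ℝ) : Prop :=
  (∀ᵐ x ∂(volume : Measure Pt), ζ (flip2 x) = ζ x) ∧
  (∀ᵐ x₁ ∂(volume : Measure ℝ), ∃ g : ℝ → ℝ,
      (∀ᵐ x₂ ∂(volume : Measure ℝ), ζ (pt x₁ x₂) = g x₂) ∧
      ∀ s t : ℝ, |s| ≤ |t| → g t ≤ g s)

/-- Hypothesis (H1). -/
def H1 (f : ℝ → ℝ) : Prop := (∀ s ≤ 0, f s = 0) ∧ ∀ s, 0 < s → 0 < f s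

/-- ζ is a maximizer of E_ε over A. -/
def IsMaximizer (f : ℝ → ℝ) (r W κ ε : ℝ) (ζ : Pt → ℝ) : Prop :=
  InA r κ ζ ∧ ∀ ζ', InA r κ ζ' → energy f r W ε ζ' ≤ energy f r W ε ζ

/-- μ is a Lagrange multiplier for ζ. -/
def IsLM (f : ℝ → ℝ) (r W ε : ℝ) (ζ : Pt → ℝ) (μ : ℝ) : Prop :=
  0 ≤ μ ∧ ∀ᵐ x ∂(volume : Measure Pt), x ∈ Dset r →
    ζ x = ε⁻¹^2 * f (Gop ζ x - W * x 0 - μ)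

/-- The essential support of ζ. -/
def essSupport (ζ : Pt → ℝ) : Set Pt :=
  {x | ∀ U ∈ nhds x, volume {y ∈ U | ζ y ≠ 0} ≠ 0}

/-- The odd extension of ζ across the x₂-axis. -/
def oddExt (ζ : Pt → ℝ) (x : Pt) : ℝ :=
  if 0 < x 0 then ζ x else if x 0 < 0 then -(ζ (reflect x)) else 0

/-- The truncated nonlinearity f_ρ. -/
def ftr (f : ℝ → ℝ) (ρ : ℝ) (s : ℝ) : ℝ := min (f s) (f ρ)

/-- A (Steiner-symmetric) maximizer of the truncated energy E_{ε,ρ} over A, together with a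
Lagrange multiplier μ, solving the truncated equation on the half plane with total mass κ. -/
def IsTruncMax (f : ℝ → ℝ) (r W κ ε ρ : ℝ) (ζ : Pt → ℝ) (μ : ℝ) : Prop :=
  InA r κ ζ ∧ SteinerSym ζ ∧
  (∀ ζ', InA r κ ζ' → energy (ftr f ρ) r W ε ζ' ≤ energy (ftr f ρ) r W ε ζ) ∧
  0 ≤ μ ∧
  (∀ᵐ x ∂(volume : Measure Pt), x ∈ halfPlane →
     ζ x = ε⁻¹^2 * ftr f ρ (Gop ζ x - W * x 0 - μ)) ∧
  (∫ x in halfPlane, ζ x) = κ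

/-
By the equation for `ζ`, `ζ ≤ M := ε⁻² f(ρ)`; moreover `ζ` has mass `κ` and vanishes where
`y₁ > 2r`. Since reflection moves `y` by `2 y₁`, at every scale `t > 0`
`G(x, y) ≤ (1/2π) (log (1 + 4r/t) + log⁺ (t / |x - y|))`.
The first term integrates against `ζ` to `(κ/2π) log (1 + 4r/t)`, the second, using `ζ ≤ M`,
to at most `(M/2π) ∫ log⁺ (t / |z|) dz ≤ M t²`. The choice `t² = κ/M` turns the second term
into `κ` and the first into `(κ/2π) (½ log M + O(1))`, where `log M = 2 log (1/ε) + log f(ρ)`.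
-/

open Set

lemma dist_eq_sqrt_coords (x y : Pt) : dist x y = √((x 0 - y 0) ^ 2 + (x 1 - y 1) ^ 2) := by
  rw [EuclideanSpace.dist_eq, Fin.sum_univ_two]
  simp [Real.dist_eq, sq_abs]

@[simp] lemma reflect_apply_zero (x : Pt) : reflect x 0 = -x 0 := by simp [reflect, pt]

@[simp] lemma reflect_apply_one (x : Pt) : reflect x 1 = x 1 := by simp [reflect, pt]

lemma dist_reflect_reflect (x y : Pt) : dist (reflect x) (reflect y) = dist x y := by
  simp only [dist_eq_sqrt_coords, reflect_apply_zero, reflect_apply_one]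
  ring_nf

lemma dist_reflect_self (y : Pt) : dist (reflect y) y = 2 * |y 0| := by
  rw [dist_eq_sqrt_coords, reflect_apply_zero, reflect_apply_one, sub_self, ← abs_two,
    ← abs_mul, ← sqrt_sq_eq_abs]
  ring_nf

lemma dist_reflect_le (x y : Pt) : dist (reflect x) y ≤ dist x y + 2 * |y 0| :=
  calc dist (reflect x) y ≤ dist (reflect x) (reflect y) + dist (reflect y) y := dist_triangle ..
    _ = dist x y + 2 * |y 0| := by rw [dist_reflect_reflect, dist_reflect_self]

lemma dist_le_dist_reflect {x y : Pt} (hx : 0 ≤ x 0) (hy : 0 ≤ y 0) :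
    dist x y ≤ dist (reflect x) y := by
  rw [dist_eq_sqrt_coords, dist_eq_sqrt_coords, reflect_apply_zero, reflect_apply_one]
  exact sqrt_le_sqrt (by nlinarith [mul_nonneg hx hy])

lemma G_nonneg {x y : Pt} (hx : x ∈ halfPlane) (hy : y ∈ halfPlane) : 0 ≤ G x y := by
  rcases (dist_nonneg : 0 ≤ dist x y).eq_or_lt with hd | hd
  · simp [G, ← hd]
  · exact mul_nonneg (by positivity)
      (log_nonneg ((one_le_div hd).2 (dist_le_dist_reflect hx.le hy.le)))

lemma log_one_add_div_le {a d t : ℝ} (ha : 0 ≤ a) (hd : 0 < d) (ht : 0 < t) :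
    log (1 + a / d) ≤ log (1 + a / t) + log⁺ (t / d) := by
  rcases le_or_gt t d with htd | hdt
  · have : log (1 + a / d) ≤ log (1 + a / t) := log_le_log (by positivity) (by gcongr)
    linarith [posLog_nonneg (x := t / d)]
  · calc log (1 + a / d) ≤ log ((1 + a / t) * (t / d)) := by
          refine log_le_log (by positivity) ?_
          rw [add_mul, one_mul, div_mul_div_cancel₀ ht.ne']
          gcongr
          exact (one_le_div hd).2 hdt.le
      _ = log (1 + a / t) + log (t / d) := log_mul (by positivity) (by positivity)
      _ ≤ log (1 + a / t) + log⁺ (t / d) := by gcongr; exact le_max_right _ _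

lemma G_le {x y : Pt} (hx : x ∈ halfPlane) (hy : y ∈ halfPlane) {R t : ℝ} (hyR : y 0 ≤ R)
    (ht : 0 < t) : G x y ≤ 1 / (2 * π) * (log (1 + 2 * R / t) + log⁺ (t / dist x y)) := by
  have hy' : 0 < y 0 := hy
  have hlog : log (1 + 2 * y 0 / t) ≤ log (1 + 2 * R / t) :=
    log_le_log (by positivity) (by gcongr)
  rcases (dist_nonneg : 0 ≤ dist x y).eq_or_lt with hd | hd
  · have : 0 ≤ log (1 + 2 * y 0 / t) := log_nonneg (by linarith [(by positivity : 0 ≤ 2 * y 0 / t)])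
    simp only [G, ← hd, div_zero, log_zero, mul_zero]
    exact mul_nonneg (by positivity) (add_nonneg (this.trans hlog) posLog_nonneg)
  · unfold G
    gcongr
    calc log (dist (reflect x) y / dist x y) ≤ log (1 + 2 * y 0 / dist x y) := by
          refine log_le_log (div_pos (hd.trans_le (dist_le_dist_reflect hx.le hy'.le)) hd) ?_
          rw [one_add_div hd.ne']
          gcongr
          simpa [abs_of_pos hy', add_comm] using dist_reflect_le x y
      _ ≤ log (1 + 2 * y 0 / t) + log⁺ (t / dist x y) := log_one_add_div_le (by positivity) hd ht
      _ ≤ log (1 + 2 * R / t) + log⁺ (t / dist x y) := by gcongr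

lemma mul_posLog_div_le_indicator {t y : ℝ} (ht : 0 ≤ t) (hy : 0 < y) :
    y * log⁺ (t / y) ≤ (Ioc 0 t).indicator (fun _ ↦ t) y := by
  rcases le_or_gt y t with hyt | hty
  · rw [indicator_of_mem (show y ∈ Ioc 0 t from ⟨hy, hyt⟩)]
    have hlog : log⁺ (t / y) ≤ t / y :=
      max_le (by positivity) (log_le_self (by positivity))
    calc y * log⁺ (t / y) ≤ y * (t / y) := by gcongr
      _ = t := mul_div_cancel₀ t hy.ne'
  · have hty' : |t / y| ≤ 1 := by
      rw [abs_of_nonneg (by positivity), div_le_one hy]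
      exact hty.le
    rw [(posLog_eq_zero_iff _).2 hty', mul_zero, indicator_of_notMem (fun h ↦ h.2.not_gt hty)]

lemma measurable_mul_posLog_div (t : ℝ) : Measurable fun y : ℝ ↦ y * log⁺ (t / y) :=
  measurable_id.mul (continuous_posLog.measurable.comp (measurable_const.div measurable_id))

lemma integrable_indicator_Ioc_const (t : ℝ) : Integrable ((Ioc 0 t).indicator fun _ ↦ t) :=
  (integrableOn_const (s := Ioc 0 t) (by simp)).integrable_indicator measurableSet_Ioc

lemma integrableOn_mul_posLog_div {t : ℝ} (ht : 0 ≤ t) :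
    IntegrableOn (fun y ↦ y * log⁺ (t / y)) (Ioi 0) := by
  refine Integrable.mono' (integrable_indicator_Ioc_const t).integrableOn
    (measurable_mul_posLog_div t).aestronglyMeasurable ?_
  filter_upwards [ae_restrict_mem measurableSet_Ioi] with y (hy : 0 < y)
  rw [Real.norm_of_nonneg (mul_nonneg hy.le posLog_nonneg)]
  exact mul_posLog_div_le_indicator ht hy

lemma setIntegral_mul_posLog_div_le {t : ℝ} (ht : 0 ≤ t) :
    ∫ y in Ioi 0, y * log⁺ (t / y) ≤ t ^ 2 :=
  calc ∫ y in Ioi 0, y * log⁺ (t / y) ≤ ∫ y in Ioi 0, (Ioc 0 t).indicator (fun _ ↦ t) y := by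
        refine setIntegral_mono_on (integrableOn_mul_posLog_div ht)
          (integrable_indicator_Ioc_const t).integrableOn
          measurableSet_Ioi fun y hy ↦ mul_posLog_div_le_indicator ht hy
    _ = t ^ 2 := by
        rw [setIntegral_indicator measurableSet_Ioc, inter_eq_right.2 Ioc_subset_Ioi_self,
          setIntegral_const]
        simp [ht, sq]

lemma integrable_posLog_div_norm {t : ℝ} (ht : 0 ≤ t) :
    Integrable fun z : Pt ↦ log⁺ (t / ‖z‖) := by
  rw [integrable_fun_norm_addHaar volume (f := fun s ↦ log⁺ (t / s))]
  simpa using integrableOn_mul_posLog_div ht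

lemma integral_posLog_div_norm_le {t : ℝ} (ht : 0 ≤ t) :
    ∫ z : Pt, log⁺ (t / ‖z‖) ≤ 2 * π * t ^ 2 := by
  rw [integral_fun_norm_addHaar volume (fun s ↦ log⁺ (t / s))]
  simp only [finrank_euclideanSpace, Fintype.card_fin, Measure.real,
    EuclideanSpace.volume_ball_fin_two, ENNReal.ofReal_one, one_pow, one_mul,
    ENNReal.toReal_ofReal pi_nonneg, Nat.add_one_sub_one, pow_one, smul_eq_mul, nsmul_eq_mul,
    Nat.cast_ofNat]
  rw [← mul_assoc]
  gcongr
  exact setIntegral_mul_posLog_div_le ht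

lemma measurable_coord (i : Fin 2) : Measurable fun x : Pt ↦ x i := by fun_prop

lemma measurableSet_halfPlane : MeasurableSet halfPlane :=
  measurableSet_lt measurable_const (measurable_coord 0)

lemma measurableSet_Dset (r : ℝ) : MeasurableSet (Dset r) :=
  (measurableSet_lt measurable_const (measurable_coord 0)).inter <|
    (measurableSet_lt (measurable_coord 0) measurable_const).inter <|
      (measurableSet_lt measurable_const (measurable_coord 1)).inter
        (measurableSet_lt (measurable_coord 1) measurable_const)

lemma Dset_subset_closedBall (r : ℝ) : Dset r ⊆ Metric.closedBall 0 (2 * r + 1) := by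
  rintro z ⟨h₁, h₂, h₃, h₄⟩
  rw [mem_closedBall_zero_iff, EuclideanSpace.norm_eq, Fin.sum_univ_two, sqrt_le_iff]
  simp only [Real.norm_eq_abs, sq_abs]
  constructor <;> nlinarith

lemma measure_Dset_lt_top (r : ℝ) : volume (Dset r) < ∞ :=
  (measure_mono (Dset_subset_closedBall r)).trans_lt measure_closedBall_lt_top

lemma InA.integrable {r κ : ℝ} {ζ : Pt → ℝ} (hA : InA r κ ζ) : Integrable ζ := by
  obtain ⟨C, hC⟩ := hA.essBdd
  have hbound : Integrable ((Dset r).indicator fun _ ↦ C) :=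
    (integrableOn_const (measure_Dset_lt_top r).ne).integrable_indicator (measurableSet_Dset r)
  refine hbound.mono' hA.measurable.aestronglyMeasurable ?_
  filter_upwards [hC, hA.support_ae] with y hyC hyD
  by_cases hy : y ∈ Dset r
  · simpa [hy] using hyC
  · simp [hy, hyD hy]

lemma log_one_add_div_sqrt_div_le {a K M : ℝ} (ha : 0 ≤ a) (hK : 0 < K) (hM : 1 ≤ M) :
    log (1 + a / √(K / M)) ≤ log M / 2 + log (1 + a / √K) := by
  have hsM : 1 ≤ √M := one_le_sqrt.2 hM
  calc log (1 + a / √(K / M)) ≤ log (√M * (1 + a / √K)) := by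
        refine log_le_log (by positivity) ?_
        rw [sqrt_div hK.le, div_div_eq_mul_div, mul_add, mul_one]
        exact add_le_add hsM (le_of_eq (by ring))
    _ = log M / 2 + log (1 + a / √K) := by
        rw [log_mul (by positivity) (by positivity), log_sqrt (by positivity)]

theorem Gop_le_of_bounded {ζ : Pt → ℝ} {x : Pt} (hx : x ∈ halfPlane) {R M t : ℝ} (hM : 0 ≤ M)
    (ht : 0 < t) (hζ : IntegrableOn ζ halfPlane) (hζ_nonneg : ∀ᵐ y, 0 ≤ ζ y)
    (hζ_le : ∀ᵐ y, y ∈ halfPlane → ζ y ≤ M) (hζ_supp : ∀ᵐ y, R < y 0 → ζ y = 0) :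
    Gop ζ x ≤ 1 / (2 * π) * log (1 + 2 * R / t) * (∫ y in halfPlane, ζ y) + M * t ^ 2 := by
  set L := 1 / (2 * π) * log (1 + 2 * R / t)
  set k : Pt → ℝ := fun y ↦ log⁺ (t / ‖y - x‖)
  have hk : Integrable k := (integrable_posLog_div_norm ht.le).comp_sub_right x
  have hk_int : ∫ y in halfPlane, k y ≤ 2 * π * t ^ 2 :=
    calc ∫ y in halfPlane, k y ≤ ∫ y, k y :=
          setIntegral_le_integral hk (.of_forall fun _ ↦ posLog_nonneg)
      _ = ∫ z : Pt, log⁺ (t / ‖z‖) := integral_sub_right_eq_self (fun z : Pt ↦ log⁺ (t / ‖z‖)) x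
      _ ≤ 2 * π * t ^ 2 := integral_posLog_div_norm_le ht.le
  have hbound : ∀ᵐ y ∂volume.restrict halfPlane, G x y * ζ y ≤ L * ζ y + M / (2 * π) * k y := by
    filter_upwards [ae_restrict_mem measurableSet_halfPlane, ae_restrict_of_ae hζ_nonneg,
      ae_restrict_of_ae hζ_le, ae_restrict_of_ae hζ_supp] with y hy h0 hle hsupp
    have hky : 0 ≤ k y := posLog_nonneg
    rcases le_or_gt (y 0) R with hyR | hyR
    · have hG : G x y ≤ L + 1 / (2 * π) * k y := by
        simpa [k, L, mul_add, dist_eq_norm'] using G_le hx hy hyR ht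
      have hyM : ζ y ≤ M := hle hy
      calc G x y * ζ y ≤ (L + 1 / (2 * π) * k y) * ζ y := by gcongr
        _ = L * ζ y + 1 / (2 * π) * (k y * ζ y) := by ring
        _ ≤ L * ζ y + 1 / (2 * π) * (k y * M) := by gcongr
        _ = L * ζ y + M / (2 * π) * k y := by ring
    · rw [hsupp hyR, mul_zero, mul_zero, zero_add]
      positivity
  calc Gop ζ x ≤ ∫ y in halfPlane, (L * ζ y + M / (2 * π) * k y) := by
        refine integral_mono_of_nonneg ?_ ((hζ.const_mul L).add (hk.integrableOn.const_mul _))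
          hbound
        filter_upwards [ae_restrict_mem measurableSet_halfPlane, ae_restrict_of_ae hζ_nonneg]
          with y hy h0
        exact mul_nonneg (G_nonneg hx hy) h0
    _ = L * (∫ y in halfPlane, ζ y) + M / (2 * π) * ∫ y in halfPlane, k y := by
        rw [integral_add (hζ.const_mul L) (hk.integrableOn.const_mul _), integral_const_mul,
          integral_const_mul]
    _ ≤ L * (∫ y in halfPlane, ζ y) + M / (2 * π) * (2 * π * t ^ 2) := by gcongr
    _ = L * (∫ y in halfPlane, ζ y) + M * t ^ 2 := by field_simp

theorem statement_16_general
    (r κ W : ℝ) (hr : 0 < r) (hκ : 0 < κ)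
    (f : ℝ → ℝ) (hf : Monotone f) (hf1 : H1 f) :
    ∃ C > (0:ℝ), ∃ ε₀ > (0:ℝ), ∀ ρ : ℝ, 1 < ρ → ∀ ε : ℝ, 0 < ε → ε < ε₀ →
      ∀ ζ μ, IsTruncMax f r W κ ε ρ ζ μ →
        ∀ x ∈ halfPlane,
          Gop ζ x ≤ κ / (2 * π) * Real.log (1 / ε) + κ / (4 * π) * Real.log (f ρ) + C := by
  have hf1_pos : 0 < f 1 := hf1.2 1 one_pos
  have hc : 0 ≤ log (1 + 4 * r / √κ) := log_nonneg (by linarith [(by positivity : 0 ≤ 4 * r / √κ)])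
  refine ⟨κ / (2 * π) * log (1 + 4 * r / √κ) + κ, by positivity, √(f 1), sqrt_pos.2 hf1_pos, ?_⟩
  rintro ρ hρ ε hε hεε₀ ζ μ ⟨hA, -, -, -, hEL, hmass⟩ x hx
  have hfρ : 0 < f ρ := hf1_pos.trans_le (hf hρ.le)
  set M := ε⁻¹ ^ 2 * f ρ with hM_def
  have hM : 1 ≤ M := by
    rw [hM_def, inv_pow, ← div_eq_inv_mul, one_le_div (by positivity)]
    exact ((lt_sqrt hε.le).1 hεε₀).le.trans (hf hρ.le)
  have hζ_le : ∀ᵐ y, y ∈ halfPlane → ζ y ≤ M := by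
    filter_upwards [hEL] with y hy hy_mem
    rw [hy hy_mem]
    exact mul_le_mul_of_nonneg_left (min_le_right _ _) (by positivity)
  have hζ_supp : ∀ᵐ y, 2 * r < y 0 → ζ y = 0 := by
    filter_upwards [hA.support_ae] with y hy hyr
    exact hy fun hD ↦ hyr.not_gt hD.2.1
  have hG := Gop_le_of_bounded hx (M := M) (t := √(κ / M)) (by positivity)
    (sqrt_pos.2 (div_pos hκ (by positivity))) hA.integrable.integrableOn hA.nonneg hζ_le hζ_supp
  rw [hmass, sq_sqrt (by positivity), mul_div_cancel₀ _ (by positivity),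
    show 2 * (2 * r) = 4 * r by ring] at hG
  have hlogM : log M = 2 * log (1 / ε) + log (f ρ) := by
    rw [log_mul (by positivity) hfρ.ne', log_pow, one_div]
    push_cast
    ring
  calc Gop ζ x ≤ 1 / (2 * π) * log (1 + 4 * r / √(κ / M)) * κ + κ := hG
    _ ≤ 1 / (2 * π) * (log M / 2 + log (1 + 4 * r / √κ)) * κ + κ := by
        gcongr
        exact log_one_add_div_sqrt_div_le (by positivity) hκ hM
    _ = κ / (2 * π) * log (1 / ε) + κ / (4 * π) * log (f ρ)
        + (κ / (2 * π) * log (1 + 4 * r / √κ) + κ) := by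
        rw [hlogM]
        ring

theorem statement_16
    (r κ W : ℝ) (hr : 0 < r) (hκ : 0 < κ) (hW : W = κ / (4 * π * r))
    (f : ℝ → ℝ) (hf : Monotone f) (hf1 : H1 f)
    (ϑ₀ ϑ₁ : ℝ) (hϑ₀ : 0 < ϑ₀) (hϑ₀' : ϑ₀ < 1) (hϑ₁ : 0 < ϑ₁)
    (hH2 : ∀ s, 0 ≤ s → Fint f s ≤ ϑ₀ * f s * s + ϑ₁ * f s)
    (hH3 : Filter.liminf
      (fun s => f s * Real.exp (-(4 * π * min (2 * ϑ₀) (2 - 2 * ϑ₀) / κ) * s)) Filter.atTop = 0) :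
    ∃ C > (0:ℝ), ∃ ε₀ > (0:ℝ), ∀ ρ : ℝ, 1 < ρ → ∀ ε : ℝ, 0 < ε → ε < ε₀ →
      ∀ ζ μ, IsTruncMax f r W κ ε ρ ζ μ →
        ∀ x ∈ halfPlane,
          Gop ζ x ≤ κ / (2 * π) * Real.log (1 / ε) + κ / (4 * π) * Real.log (f ρ) + C :=
  statement_16_general r κ W hr hκ f hf hf1

end
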